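/- arXiv:1407.0088 — 3 statements merged into one kernel-verified Lean document; each statement's English description precedes it below -/
import Mathlib

section
/- Approximate projection consequence: let w ∈ ℝ^n, let Γ and R be subsets of indices with orthogonal projections P_Γ and P_R onto the corresponding coordinate subspaces, and suppose η ≥ 1 satisfies ‖w - P_Γ w‖₂ ≤ η ‖w - P_R w‖₂. Then ‖P_R w‖₂² ≤ ‖P_Γ w‖₂² + ((η² - 1)/η²) ‖w - P_Γ w‖₂². -/
/-!
By Pythagoras, `‖P w‖² = ‖w‖² - ‖w - P w‖²` for any orthogonal projection `P`. So the claim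
reduces to `‖w - P_R w‖² ≥ ‖w - P_Γ w‖² / η²`, which is the squared hypothesis.
-/

theorem Submodule.norm_sq_orthogonalProjectionOnto_eq {𝕜 E : Type*} [RCLike 𝕜]
    [NormedAddCommGroup E] [InnerProductSpace 𝕜 E] (K : Submodule 𝕜 E)
    [K.HasOrthogonalProjection] (w : E) :
    ‖(K.orthogonalProjectionOnto w : E)‖ ^ 2 = ‖w‖ ^ 2 - ‖w - K.orthogonalProjectionOnto w‖ ^ 2 := by
  have h := K.norm_sq_eq_add_norm_sq_starProjection w
  rw [Submodule.starProjection_orthogonal_val] at h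
  exact eq_sub_of_add_eq h.symm

theorem sq_div_sq_le_sq_of_le_mul {a b η : ℝ} (hη : 0 < η) (ha : 0 ≤ a) (h : a ≤ η * b) :
    a ^ 2 / η ^ 2 ≤ b ^ 2 := by
  rw [div_le_iff₀ (by positivity), ← mul_pow, mul_comm]
  exact pow_le_pow_left₀ ha h 2

theorem approx_projection_sq_bound {n : ℕ}
    (Γ R : Submodule ℝ (EuclideanSpace ℝ (Fin n)))
    (w : EuclideanSpace ℝ (Fin n)) (η : ℝ) (hη : 1 ≤ η)
    (h : ‖w - (Submodule.orthogonalProjectionOnto Γ w : EuclideanSpace ℝ (Fin n))‖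
        ≤ η * ‖w - (Submodule.orthogonalProjectionOnto R w : EuclideanSpace ℝ (Fin n))‖) :
    ‖(Submodule.orthogonalProjectionOnto R w : EuclideanSpace ℝ (Fin n))‖ ^ 2
      ≤ ‖(Submodule.orthogonalProjectionOnto Γ w : EuclideanSpace ℝ (Fin n))‖ ^ 2
        + (η ^ 2 - 1) / η ^ 2 *
          ‖w - (Submodule.orthogonalProjectionOnto Γ w : EuclideanSpace ℝ (Fin n))‖ ^ 2 := by
  set dΓ := ‖w - (Γ.orthogonalProjectionOnto w : EuclideanSpace ℝ (Fin n))‖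
  have hη₀ : 0 < η := by linarith
  have hdist : dΓ ^ 2 / η ^ 2 ≤ ‖w - (R.orthogonalProjectionOnto w : EuclideanSpace ℝ (Fin n))‖ ^ 2 :=
    sq_div_sq_le_sq_of_le_mul hη₀ (norm_nonneg _) h
  have hcoeff : (η ^ 2 - 1) / η ^ 2 * dΓ ^ 2 = dΓ ^ 2 - dΓ ^ 2 / η ^ 2 := by
    field_simp
  rw [R.norm_sq_orthogonalProjectionOnto_eq, Γ.norm_sq_orthogonalProjectionOnto_eq, hcoeff]
  linarith
end

section
/- Approximate projection norm bound: under the hypotheses that ‖w - P_Γ w‖₂ ≤ η ‖w - P_R w‖₂ with η ≥ 1 and P_Γ, P_R orthogonal projections, one has ‖P_R w‖₂ ≤ ‖P_Γ w‖₂ + √((η² - 1)/η²) ‖w - P_Γ w‖₂. -/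
/-!
By Pythagoras, `‖P_Γ w‖² + ‖w - P_Γ w‖² = ‖w‖² = ‖P_R w‖² + ‖w - P_R w‖²`, and the hypothesis gives
`‖w - P_R w‖² ≥ ‖w - P_Γ w‖² / η²`. Hence `‖P_R w‖² ≤ ‖P_Γ w‖² + (1 - 1/η²) ‖w - P_Γ w‖²`, and the
square root of the right-hand side is at most `‖P_Γ w‖ + √(1 - 1/η²) ‖w - P_Γ w‖`.
-/

theorem Submodule.norm_sq_starProjection_add_norm_sq_sub_starProjection {𝕜 E : Type*} [RCLike 𝕜]
    [NormedAddCommGroup E] [InnerProductSpace 𝕜 E] (K : Submodule 𝕜 E)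
    [K.HasOrthogonalProjection] (w : E) :
    ‖K.starProjection w‖ ^ 2 + ‖w - K.starProjection w‖ ^ 2 = ‖w‖ ^ 2 := by
  rw [norm_sq_eq_add_norm_sq_starProjection w K, starProjection_orthogonal]
  rfl

theorem sq_le_sq_add_mul_sq_of_sq_add_sq_eq {a b c d η : ℝ} (hη : η ≠ 0) (hc : 0 ≤ c)
    (hcd : c ≤ η * d) (hsum : a ^ 2 + c ^ 2 = b ^ 2 + d ^ 2) :
    b ^ 2 ≤ a ^ 2 + (η ^ 2 - 1) / η ^ 2 * c ^ 2 := by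
  have hd : c ^ 2 / η ^ 2 ≤ d ^ 2 := by
    refine div_le_of_le_mul₀ (sq_nonneg η) (sq_nonneg d) ?_
    simpa only [mul_pow, mul_comm] using pow_le_pow_left₀ hc hcd 2
  calc b ^ 2 = a ^ 2 + c ^ 2 - d ^ 2 := by linarith
    _ ≤ a ^ 2 + c ^ 2 - c ^ 2 / η ^ 2 := by linarith
    _ = a ^ 2 + (η ^ 2 - 1) / η ^ 2 * c ^ 2 := by field_simp; ring

theorem le_add_sqrt_mul_of_sq_le {a b c t : ℝ} (ha : 0 ≤ a) (hc : 0 ≤ c)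
    (h : b ^ 2 ≤ a ^ 2 + t * c ^ 2) : b ≤ a + √t * c := by
  have hsq : b ^ 2 ≤ (a + √t * c) ^ 2 :=
    calc b ^ 2 ≤ a ^ 2 + t * c ^ 2 := h
      _ ≤ a ^ 2 + √t ^ 2 * c ^ 2 := by gcongr; exact Real.sq_sqrt' ▸ le_max_left t 0
      _ ≤ (a + √t * c) ^ 2 := by nlinarith [mul_nonneg ha (mul_nonneg (Real.sqrt_nonneg t) hc)]
  exact (le_abs_self b).trans (abs_le_of_sq_le_sq hsq (by positivity))

theorem approx_projection_norm_bound {n : ℕ}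
    (Γ R : Submodule ℝ (EuclideanSpace ℝ (Fin n)))
    (w : EuclideanSpace ℝ (Fin n)) (η : ℝ) (hη : 1 ≤ η)
    (h : ‖w - (Submodule.orthogonalProjectionOnto Γ w : EuclideanSpace ℝ (Fin n))‖
        ≤ η * ‖w - (Submodule.orthogonalProjectionOnto R w : EuclideanSpace ℝ (Fin n))‖) :
    ‖(Submodule.orthogonalProjectionOnto R w : EuclideanSpace ℝ (Fin n))‖
      ≤ ‖(Submodule.orthogonalProjectionOnto Γ w : EuclideanSpace ℝ (Fin n))‖
        + Real.sqrt ((η ^ 2 - 1) / η ^ 2) *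
          ‖w - (Submodule.orthogonalProjectionOnto Γ w : EuclideanSpace ℝ (Fin n))‖ := by
  simp only [Submodule.coe_orthogonalProjectionOnto_apply] at h ⊢
  have hsum : ‖Γ.starProjection w‖ ^ 2 + ‖w - Γ.starProjection w‖ ^ 2
      = ‖R.starProjection w‖ ^ 2 + ‖w - R.starProjection w‖ ^ 2 := by
    rw [Γ.norm_sq_starProjection_add_norm_sq_sub_starProjection,
      R.norm_sq_starProjection_add_norm_sq_sub_starProjection]
  exact le_add_sqrt_mul_of_sq_le (norm_nonneg _) (norm_nonneg _) <|
    sq_le_sq_add_mul_sq_of_sq_add_sq_eq (zero_lt_one.trans_le hη).ne' (norm_nonneg _) h hsum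
end

section
/- Stochastic contraction estimate (unprojected version): under the same setup, with ᾱ = max_i ρ⁺(i)/(M p(i)) and ρ̄⁺ = (1/M)∑_i ρ⁺(i), assuming 1 + γ²ᾱρ̄⁺ - 2γρ⁻ ≥ 0, for all w, w' ∈ V one has E_i‖w' - w - (γ/(M p(i)))(∇f_i(w') - ∇f_i(w))‖₂ ≤ √(1 + γ²ᾱρ̄⁺ - 2γρ⁻) ‖w' - w‖₂. -/
open scoped RealInnerProductSpace

lemma grad_avg {n M : ℕ} (f : Fin M → EuclideanSpace ℝ (Fin n) → ℝ)
    (hf : ∀ i, Differentiable ℝ (f i)) (w : EuclideanSpace ℝ (Fin n)) :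
    gradient (fun u => (1 / (M : ℝ)) * ∑ i, f i u) w
      = (1 / (M : ℝ)) • ∑ i, gradient (f i) w := by
  have hsum : DifferentiableAt ℝ (fun u => ∑ i, f i u) w :=
    DifferentiableAt.fun_sum fun i _ => (hf i).differentiableAt
  have h1 : fderiv ℝ (fun u => (1 / (M : ℝ)) * ∑ i, f i u) w
      = (1 / (M : ℝ)) • fderiv ℝ (fun u => ∑ i, f i u) w := by
    simpa using fderiv_const_mul hsum ((1 : ℝ) / M)
  have h2 : fderiv ℝ (fun u => ∑ i, f i u) w = ∑ i, fderiv ℝ (f i) w :=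
    fderiv_fun_sum fun i _ => (hf i).differentiableAt
  unfold gradient
  rw [h1, h2, map_smul, map_sum]

set_option maxHeartbeats 1000000 in
theorem stochastic_contraction_unprojected {n M : ℕ} (hM : 0 < M)
    (f : Fin M → EuclideanSpace ℝ (Fin n) → ℝ)
    (hf : ∀ i, Differentiable ℝ (f i))
    (V : Submodule ℝ (EuclideanSpace ℝ (Fin n)))
    (ρplus : Fin M → ℝ) (hρplus : ∀ i, 0 < ρplus i)
    (ρminus : ℝ) (hρminus : 0 < ρminus)
    (hlip : ∀ i, ∀ w ∈ V, ∀ w' ∈ V,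
      ‖gradient (f i) w' - gradient (f i) w‖ ≤ ρplus i * ‖w' - w‖)
    (hrsc : ∀ w ∈ V, ∀ w' ∈ V,
      ρminus * ‖w' - w‖ ^ 2
        ≤ ⟪w' - w, gradient (fun u => (1 / (M : ℝ)) * ∑ i, f i u) w'
              - gradient (fun u => (1 / (M : ℝ)) * ∑ i, f i u) w⟫)
    (p : Fin M → ℝ) (hp : ∀ i, 0 < p i) (hp1 : ∑ i, p i = 1)
    (α : ℝ) (hα : IsGreatest (Set.range fun i => ρplus i / (M * p i)) α)
    (ρbar : ℝ) (hρbar : ρbar = (1 / (M : ℝ)) * ∑ i, ρplus i)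
    (γ : ℝ) (hγ : 0 < γ)
    (hnn : 0 ≤ 1 + γ ^ 2 * α * ρbar - 2 * γ * ρminus) :
    ∀ w ∈ V, ∀ w' ∈ V,
      ∑ i, p i *
          ‖w' - w - (γ / (M * p i)) • (gradient (f i) w' - gradient (f i) w)‖
        ≤ Real.sqrt (1 + γ ^ 2 * α * ρbar - 2 * γ * ρminus) * ‖w' - w‖ := by
  intro w hw w' hw'
  have hMpos : (0 : ℝ) < M := by exact_mod_cast hM
  have hMne : (M : ℝ) ≠ 0 := ne_of_gt hMpos
  set C : ℝ := 1 + γ ^ 2 * α * ρbar - 2 * γ * ρminus with hC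
  set d := w' - w with hd
  set g : Fin M → EuclideanSpace ℝ (Fin n) :=
    fun i => gradient (f i) w' - gradient (f i) w with hg
  have hαi : ∀ i, ρplus i / (M * p i) ≤ α := fun i => hα.2 ⟨i, rfl⟩
  have hα0 : 0 ≤ α := by
    have i0 : Fin M := ⟨0, hM⟩
    exact le_trans (le_of_lt (div_pos (hρplus i0) (mul_pos hMpos (hp i0)))) (hαi i0)
  -- per-term expansion
  have expand : ∀ i, p i * ‖d - (γ / (M * p i)) • g i‖ ^ 2
      = p i * ‖d‖ ^ 2 - (2 * γ / M) * ⟪d, g i⟫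
        + γ ^ 2 / (M ^ 2 * p i) * ‖g i‖ ^ 2 := by
    intro i
    have hpi : p i ≠ 0 := ne_of_gt (hp i)
    have hci : (0 : ℝ) ≤ γ / (M * p i) :=
      le_of_lt (div_pos hγ (mul_pos hMpos (hp i)))
    rw [norm_sub_sq_real, real_inner_smul_right, norm_smul, Real.norm_eq_abs,
      abs_of_nonneg hci, mul_pow]
    field_simp
  -- sum of squares
  have hS2eq : ∑ i, p i * ‖d - (γ / (M * p i)) • g i‖ ^ 2
      = ‖d‖ ^ 2 - (2 * γ / M) * ⟪d, ∑ i, g i⟫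
        + ∑ i, γ ^ 2 / (M ^ 2 * p i) * ‖g i‖ ^ 2 := by
    rw [Finset.sum_congr rfl fun i _ => expand i]
    rw [Finset.sum_add_distrib, Finset.sum_sub_distrib, ← Finset.sum_mul, hp1,
      inner_sum, Finset.mul_sum]
    ring
  -- cross term bound
  have hGsum : gradient (fun u => (1 / (M : ℝ)) * ∑ i, f i u) w'
      - gradient (fun u => (1 / (M : ℝ)) * ∑ i, f i u) w
      = (1 / (M : ℝ)) • ∑ i, g i := by
    rw [grad_avg f hf, grad_avg f hf, ← smul_sub, ← Finset.sum_sub_distrib]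
  have hcross : ρminus * ‖d‖ ^ 2 ≤ (1 / (M : ℝ)) * ⟪d, ∑ i, g i⟫ := by
    have := hrsc w hw w' hw'
    rwa [hGsum, real_inner_smul_right] at this
  have hcross' : -((2 * γ / M) * ⟪d, ∑ i, g i⟫) ≤ -(2 * γ * (ρminus * ‖d‖ ^ 2)) := by
    have h2γ : (0 : ℝ) ≤ 2 * γ := by linarith
    have := mul_le_mul_of_nonneg_left hcross h2γ
    have heq : 2 * γ * ((1 / (M : ℝ)) * ⟪d, ∑ i, g i⟫)
        = (2 * γ / M) * ⟪d, ∑ i, g i⟫ := by field_simp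
    linarith [heq ▸ this]
  -- variance term bound
  have hT : ∑ i, γ ^ 2 / (M ^ 2 * p i) * ‖g i‖ ^ 2
      ≤ γ ^ 2 * α * ρbar * ‖d‖ ^ 2 := by
    have hterm : ∀ i, γ ^ 2 / (M ^ 2 * p i) * ‖g i‖ ^ 2
        ≤ γ ^ 2 * α * (ρplus i / M) * ‖d‖ ^ 2 := by
      intro i
      have hlipi := hlip i w hw w' hw'
      have hgsq : ‖g i‖ ^ 2 ≤ (ρplus i * ‖d‖) ^ 2 := by
        have h0 : (0 : ℝ) ≤ ‖g i‖ := norm_nonneg _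
        exact pow_le_pow_left₀ h0 hlipi 2
      have hpi : p i ≠ 0 := ne_of_gt (hp i)
      have hc0 : (0 : ℝ) ≤ γ ^ 2 / (M ^ 2 * p i) :=
        le_of_lt (div_pos (pow_pos hγ 2) (mul_pos (pow_pos hMpos 2) (hp i)))
      calc γ ^ 2 / (M ^ 2 * p i) * ‖g i‖ ^ 2
          ≤ γ ^ 2 / (M ^ 2 * p i) * (ρplus i * ‖d‖) ^ 2 :=
            mul_le_mul_of_nonneg_left hgsq hc0
        _ = γ ^ 2 * (ρplus i / (M * p i)) * (ρplus i / M) * ‖d‖ ^ 2 := by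
            field_simp
        _ ≤ γ ^ 2 * α * (ρplus i / M) * ‖d‖ ^ 2 := by
            have h1 : γ ^ 2 * (ρplus i / (M * p i)) ≤ γ ^ 2 * α :=
              mul_le_mul_of_nonneg_left (hαi i) (le_of_lt (pow_pos hγ 2))
            have h2 : (0 : ℝ) ≤ ρplus i / M * ‖d‖ ^ 2 :=
              mul_nonneg (div_nonneg (le_of_lt (hρplus i)) (le_of_lt hMpos))
                (sq_nonneg _)
            nlinarith
    calc ∑ i, γ ^ 2 / (M ^ 2 * p i) * ‖g i‖ ^ 2
        ≤ ∑ i, γ ^ 2 * α * (ρplus i / M) * ‖d‖ ^ 2 :=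
          Finset.sum_le_sum fun i _ => hterm i
      _ = γ ^ 2 * α * ρbar * ‖d‖ ^ 2 := by
          have e : ∀ i : Fin M, γ ^ 2 * α * (ρplus i / ↑M) * ‖d‖ ^ 2
              = (γ ^ 2 * α * ‖d‖ ^ 2 / ↑M) * ρplus i := by intro i; ring
          rw [Finset.sum_congr rfl fun i _ => e i, ← Finset.mul_sum, hρbar]
          ring
  have hS2 : ∑ i, p i * ‖d - (γ / (M * p i)) • g i‖ ^ 2 ≤ C * ‖d‖ ^ 2 := by
    rw [hS2eq, hC]
    nlinarith [hcross', hT]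
  -- Cauchy-Schwarz step
  set S1 := ∑ i, p i * ‖d - (γ / (M * p i)) • g i‖ with hS1
  have hS1nn : 0 ≤ S1 :=
    Finset.sum_nonneg fun i _ => mul_nonneg (le_of_lt (hp i)) (norm_nonneg _)
  have hCS : S1 ^ 2 ≤ ∑ i, p i * ‖d - (γ / (M * p i)) • g i‖ ^ 2 := by
    have := Finset.sum_mul_sq_le_sq_mul_sq Finset.univ
      (fun i => Real.sqrt (p i))
      (fun i => Real.sqrt (p i) * ‖d - (γ / (M * p i)) • g i‖)
    have e1 : ∀ i : Fin M, Real.sqrt (p i) *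
        (Real.sqrt (p i) * ‖d - (γ / (M * p i)) • g i‖)
        = p i * ‖d - (γ / (M * p i)) • g i‖ := by
      intro i
      rw [← mul_assoc, Real.mul_self_sqrt (le_of_lt (hp i))]
    have e2 : ∀ i : Fin M, Real.sqrt (p i) ^ 2 = p i := fun i =>
      Real.sq_sqrt (le_of_lt (hp i))
    have e3 : ∀ i : Fin M, (Real.sqrt (p i) * ‖d - (γ / (M * p i)) • g i‖) ^ 2
        = p i * ‖d - (γ / (M * p i)) • g i‖ ^ 2 := by
      intro i
      rw [mul_pow, Real.sq_sqrt (le_of_lt (hp i))]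
    simp only [e1, e2, e3] at this
    rw [hp1, one_mul] at this
    exact this
  have hfinal : S1 ^ 2 ≤ (Real.sqrt C * ‖d‖) ^ 2 := by
    have : (Real.sqrt C * ‖d‖) ^ 2 = C * ‖d‖ ^ 2 := by
      rw [mul_pow, Real.sq_sqrt hnn]
    rw [this]
    exact le_trans hCS hS2
  have hrhs : 0 ≤ Real.sqrt C * ‖d‖ :=
    mul_nonneg (Real.sqrt_nonneg _) (norm_nonneg _)
  calc S1 ≤ Real.sqrt C * ‖d‖ := by
        nlinarith [hfinal, hS1nn, hrhs]
    _ = Real.sqrt (1 + γ ^ 2 * α * ρbar - 2 * γ * ρminus) * ‖w' - w‖ := rfl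
end
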